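/- arXiv:2006.10483 — 4 statements merged into one kernel-verified Lean document; each statement's English description precedes it below -/
import Mathlib

section
/- (Proposition: characterization for binary sensitive attribute.) Suppose S takes values in {0,1}. The random variables Z and S are conditionally independent given F if and only if, for every measurable function h̃ : 𝒳_Z × 𝒳_F → ℝ with E[h̃(Z,F)²] < ∞ and E[h̃(Z,F) | σ(F)] = 0 almost surely, one has E[𝟙{S=1} · h̃(Z,F)] = 0. -/
/-!
For `S ∈ {0, 1}`, conditional independence of `Z` and `S` given `F` says
`P(Z ∈ A, S = 1 | F) = P(Z ∈ A | F) P(S = 1 | F)` for all `A`; checked on the π-system of sets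
`{Z ∈ A} ∩ {F ∈ C}`, this is exactly `P(S = 1 | Z, F) = P(S = 1 | F)`. In `L²`, `E[g | F]` is the
projection of `E[g | Z, F]` onto the `σ(F)`-measurable functions, so the two coincide iff `g` is
orthogonal to every `σ(Z, F)`-measurable `W` with `E[W | F] = 0`; for the converse it suffices to
test against `W = 𝟙_A - P(A | F)`. By Doob–Dynkin these `W` are exactly the `h(Z, F)`.
-/

open MeasureTheory ProbabilityTheory

namespace MeasureTheory

variable {Ω : Type*} {m m₁ m₂ mΩ : MeasurableSpace Ω} {P : Measure Ω}

theorem isPiSystem_image2_inter {C D : Set (Set Ω)} (hC : IsPiSystem C) (hD : IsPiSystem D) :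
    IsPiSystem (Set.image2 (· ∩ ·) C D) := by
  rintro _ ⟨a, ha, c, hc, rfl⟩ _ ⟨a', ha', c', hc', rfl⟩ hne
  rw [Set.inter_inter_inter_comm] at hne ⊢
  exact ⟨_, hC a ha a' ha' hne.left, _, hD c hc c' hc' hne.right, rfl⟩

theorem generateFrom_image2_inter_measurableSet (m₁ m₂ : MeasurableSpace Ω) :
    MeasurableSpace.generateFrom
      (Set.image2 (· ∩ ·) {s | MeasurableSet[m₁] s} {s | MeasurableSet[m₂] s}) = m₁ ⊔ m₂ := by
  refine le_antisymm (MeasurableSpace.generateFrom_le ?_) (sup_le ?_ ?_)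
  · rintro _ ⟨a, ha, c, hc, rfl⟩
    exact (le_sup_left (a := m₁) a ha).inter (le_sup_right (b := m₂) c hc)
  · exact fun a ha => MeasurableSpace.measurableSet_generateFrom
      ⟨a, ha, Set.univ, MeasurableSet.univ, Set.inter_univ a⟩
  · exact fun c hc => MeasurableSpace.measurableSet_generateFrom
      ⟨Set.univ, MeasurableSet.univ, c, hc, Set.univ_inter c⟩

theorem integral_mul_indicator_one (f : Ω → ℝ) {A : Set Ω} (hA : MeasurableSet A) :
    ∫ ω, f ω * A.indicator (fun _ => (1 : ℝ)) ω ∂P = ∫ ω in A, f ω ∂P := by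
  rw [← integral_indicator hA]
  congr with ω
  by_cases hω : ω ∈ A <;> simp [hω]

theorem setIntegral_eq_of_isPiSystem (hm : m ≤ mΩ) {C : Set (Set Ω)}
    (hgen : m = MeasurableSpace.generateFrom C) (hpi : IsPiSystem C) {f g : Ω → ℝ}
    (hf : Integrable f P) (hg : Integrable g P)
    (hC : ∀ A ∈ C, ∫ ω in A, f ω ∂P = ∫ ω in A, g ω ∂P)
    (huniv : ∫ ω, f ω ∂P = ∫ ω, g ω ∂P) {A : Set Ω} (hA : MeasurableSet[m] A) :
    ∫ ω in A, f ω ∂P = ∫ ω in A, g ω ∂P := by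
  induction A, hA using MeasurableSpace.induction_on_inter hgen hpi with
  | empty => simp
  | basic A hA => exact hC A hA
  | compl A hA ih =>
    have hf' := integral_add_compl (hm A hA) hf
    have hg' := integral_add_compl (hm A hA) hg
    linarith
  | iUnion A hdisj hA ih =>
    rw [integral_iUnion (fun i => hm _ (hA i)) hdisj hf.integrableOn,
      integral_iUnion (fun i => hm _ (hA i)) hdisj hg.integrableOn]
    exact tsum_congr ih

variable [IsFiniteMeasure P]

theorem setIntegral_mul_condExp_of_stronglyMeasurable (hm : m ≤ mΩ) {X g : Ω → ℝ}
    (hX : StronglyMeasurable[m] X) (hXg : Integrable (X * g) P) (hg : Integrable g P)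
    {C : Set Ω} (hC : MeasurableSet[m] C) :
    ∫ ω in C, X ω * g ω ∂P = ∫ ω in C, X ω * (P[g|m]) ω ∂P := by
  refine (setIntegral_condExp hm hXg hC).symm.trans (setIntegral_congr_ae (hm C hC) ?_)
  filter_upwards [condExp_mul_of_stronglyMeasurable_left hX hXg hg] with ω hω _ using hω

theorem integral_mul_condExp_of_stronglyMeasurable (hm : m ≤ mΩ) {X g : Ω → ℝ}
    (hX : StronglyMeasurable[m] X) (hXg : Integrable (X * g) P) (hg : Integrable g P) :
    ∫ ω, X ω * g ω ∂P = ∫ ω, X ω * (P[g|m]) ω ∂P := by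
  simpa using setIntegral_mul_condExp_of_stronglyMeasurable hm hX hXg hg MeasurableSet.univ

theorem integral_mul_eq_zero_of_condExp_ae_eq (hm : m ≤ m₂) (hm₂ : m₂ ≤ mΩ) {g W : Ω → ℝ}
    (hg : MemLp g 2 P) (hgm : P[g|m₂] =ᵐ[P] P[g|m]) (hW : StronglyMeasurable[m₂] W)
    (hW2 : MemLp W 2 P) (hW0 : P[W|m] =ᵐ[P] 0) :
    ∫ ω, g ω * W ω ∂P = 0 :=
  calc ∫ ω, g ω * W ω ∂P = ∫ ω, W ω * g ω ∂P := by simp only [mul_comm]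
    _ = ∫ ω, W ω * (P[g|m₂]) ω ∂P :=
      integral_mul_condExp_of_stronglyMeasurable hm₂ hW (hW2.integrable_mul hg)
        (hg.integrable one_le_two)
    _ = ∫ ω, (P[g|m]) ω * W ω ∂P :=
      integral_congr_ae (hgm.mono fun ω hω => by simp only [hω, mul_comm])
    _ = ∫ ω, (P[g|m]) ω * (P[W|m]) ω ∂P :=
      integral_mul_condExp_of_stronglyMeasurable (hm.trans hm₂) stronglyMeasurable_condExp
        ((hg.condExp one_le_two).integrable_mul hW2) (hW2.integrable one_le_two)
    _ = ∫ _, (0 : ℝ) ∂P := integral_congr_ae (hW0.mono fun ω hω => by simp [hω])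
    _ = 0 := integral_zero _ _

theorem condExp_ae_eq_of_forall_integral_mul_eq_zero (hm : m ≤ m₂) (hm₂ : m₂ ≤ mΩ)
    {g : Ω → ℝ} (hg : MemLp g 2 P)
    (horth : ∀ W : Ω → ℝ, StronglyMeasurable[m₂] W → MemLp W 2 P → P[W|m] =ᵐ[P] 0 →
      ∫ ω, g ω * W ω ∂P = 0) :
    P[g|m₂] =ᵐ[P] P[g|m] := by
  have hmΩ : m ≤ mΩ := hm.trans hm₂
  refine (ae_eq_condExp_of_forall_setIntegral_eq hm₂ (hg.integrable one_le_two)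
    (fun _ _ _ => integrable_condExp.integrableOn) (fun A hA _ => ?_)
    (stronglyMeasurable_condExp.mono hm).aestronglyMeasurable).symm
  set e := P⟦A|m⟧
  have hA2 : MemLp (A.indicator fun _ => (1 : ℝ)) 2 P :=
    memLp_indicator_const 2 (hm₂ A hA) 1 (Or.inr (measure_ne_top P A))
  have he2 : MemLp e 2 P := hA2.condExp one_le_two
  have he : P[e|m] = e := condExp_of_stronglyMeasurable hmΩ stronglyMeasurable_condExp
    (he2.integrable one_le_two)
  have hcentered := horth ((A.indicator fun _ => (1 : ℝ)) - e)
    ((stronglyMeasurable_const.indicator hA).sub (stronglyMeasurable_condExp.mono hm))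
    (hA2.sub he2) <| by
      filter_upwards [condExp_sub (hA2.integrable one_le_two) (he2.integrable one_le_two) m]
        with ω hω
      rw [hω, Pi.sub_apply, he, sub_self, Pi.zero_apply]
  simp only [Pi.sub_apply, mul_sub] at hcentered
  rw [integral_sub (f := fun ω => g ω * A.indicator (fun _ => (1 : ℝ)) ω)
    (g := fun ω => g ω * e ω)
    (hg.integrable_mul hA2) (hg.integrable_mul he2), sub_eq_zero] at hcentered
  calc ∫ ω in A, (P[g|m]) ω ∂P
      = ∫ ω, (P[g|m]) ω * A.indicator (fun _ => (1 : ℝ)) ω ∂P :=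
        (integral_mul_indicator_one _ (hm₂ A hA)).symm
    _ = ∫ ω, (P[g|m]) ω * e ω ∂P :=
        integral_mul_condExp_of_stronglyMeasurable hmΩ stronglyMeasurable_condExp
          ((hg.condExp one_le_two).integrable_mul hA2) (hA2.integrable one_le_two)
    _ = ∫ ω, e ω * g ω ∂P := by
        simp only [mul_comm _ (e _)]
        exact (integral_mul_condExp_of_stronglyMeasurable hmΩ stronglyMeasurable_condExp
          (he2.integrable_mul hg) (hg.integrable one_le_two)).symm
    _ = ∫ ω in A, g ω ∂P := by
        simp only [mul_comm (e _)]
        rw [← hcentered, integral_mul_indicator_one _ (hm₂ A hA)]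

theorem condExp_ae_eq_condExp_iff_forall_integral_mul_eq_zero (hm : m ≤ m₂) (hm₂ : m₂ ≤ mΩ)
    {g : Ω → ℝ} (hg : MemLp g 2 P) :
    P[g|m₂] =ᵐ[P] P[g|m] ↔ ∀ W : Ω → ℝ, StronglyMeasurable[m₂] W → MemLp W 2 P →
      P[W|m] =ᵐ[P] 0 → ∫ ω, g ω * W ω ∂P = 0 :=
  ⟨fun hgm _ hW hW2 hW0 => integral_mul_eq_zero_of_condExp_ae_eq hm hm₂ hg hgm hW hW2 hW0,
    condExp_ae_eq_of_forall_integral_mul_eq_zero hm hm₂ hg⟩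

theorem condExp_indicator_condExp_ae_eq_mul {g : Ω → ℝ} {A : Set Ω} (hA : MeasurableSet A) :
    P[A.indicator (P[g|m])|m] =ᵐ[P] P⟦A|m⟧ * P[g|m] := by
  have hind : A.indicator (P[g|m]) = P[g|m] * A.indicator fun _ => (1 : ℝ) := by
    ext ω
    by_cases hω : ω ∈ A <;> simp [hω]
  have hint : Integrable (A.indicator (P[g|m])) P := integrable_condExp.indicator hA
  rw [hind] at hint ⊢
  rw [mul_comm (P⟦A|m⟧)]
  exact condExp_mul_of_stronglyMeasurable_left stronglyMeasurable_condExp hint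
    ((integrable_const 1).indicator hA)

theorem condExp_sup_ae_eq_condExp_iff (hm₁ : m₁ ≤ mΩ) (hm : m ≤ mΩ) {g : Ω → ℝ}
    (hg : Integrable g P) :
    P[g|m₁ ⊔ m] =ᵐ[P] P[g|m] ↔
      ∀ A, MeasurableSet[m₁] A → P[A.indicator g|m] =ᵐ[P] P⟦A|m⟧ * P[g|m] := by
  have hsup : m₁ ⊔ m ≤ mΩ := sup_le hm₁ hm
  constructor
  · intro h A hA
    have hA' : MeasurableSet[m₁ ⊔ m] A := le_sup_left (a := m₁) A hA
    calc P[A.indicator g|m] =ᵐ[P] P[P[A.indicator g|m₁ ⊔ m]|m] :=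
          (condExp_condExp_of_le le_sup_right hsup).symm
      _ =ᵐ[P] P[A.indicator (P[g|m₁ ⊔ m])|m] := condExp_congr_ae (condExp_indicator hg hA')
      _ =ᵐ[P] P[A.indicator (P[g|m])|m] := by
          refine condExp_congr_ae (h.mono fun ω hω => ?_)
          by_cases hωA : ω ∈ A <;> simp [hωA, hω]
      _ =ᵐ[P] P⟦A|m⟧ * P[g|m] := condExp_indicator_condExp_ae_eq_mul (hm₁ A hA)
  · intro h
    refine (ae_eq_condExp_of_forall_setIntegral_eq hsup hg
      (fun _ _ _ => integrable_condExp.integrableOn) (fun A hA _ => ?_)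
      (stronglyMeasurable_condExp.mono (le_sup_right : m ≤ m₁ ⊔ m)).aestronglyMeasurable).symm
    refine setIntegral_eq_of_isPiSystem hsup (generateFrom_image2_inter_measurableSet m₁ m).symm
      (isPiSystem_image2_inter (@MeasurableSpace.isPiSystem_measurableSet Ω m₁)
        (@MeasurableSpace.isPiSystem_measurableSet Ω m))
      integrable_condExp hg ?_ (integral_condExp hm) hA
    rintro _ ⟨a, ha, c, hc, rfl⟩
    have ha' : MeasurableSet[mΩ] a := hm₁ a ha
    calc ∫ ω in a ∩ c, (P[g|m]) ω ∂P = ∫ ω in c, a.indicator (P[g|m]) ω ∂P := by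
          rw [setIntegral_indicator ha', Set.inter_comm]
      _ = ∫ ω in c, (P[a.indicator (P[g|m])|m]) ω ∂P :=
          (setIntegral_condExp hm (integrable_condExp.indicator ha') hc).symm
      _ = ∫ ω in c, (P[a.indicator g|m]) ω ∂P := by
          refine setIntegral_congr_ae (hm c hc) ?_
          filter_upwards [condExp_indicator_condExp_ae_eq_mul ha', h a ha] with ω h₁ h₂ _
          rw [h₁, h₂]
      _ = ∫ ω in c, a.indicator g ω ∂P := setIntegral_condExp hm (hg.indicator ha') hc
      _ = ∫ ω in a ∩ c, g ω ∂P := by rw [setIntegral_indicator ha', Set.inter_comm]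

theorem forall_stronglyMeasurable_comap_iff {α β : Type*} [MeasurableSpace β] {f : α → β}
    {p : (α → ℝ) → Prop} :
    (∀ W : α → ℝ, StronglyMeasurable[MeasurableSpace.comap f inferInstance] W → p W) ↔
      ∀ h : β → ℝ, Measurable h → p fun a => h (f a) :=
  ⟨fun H h hh => H _ (hh.comp (comap_measurable f)).stronglyMeasurable, fun H W hW => by
    obtain ⟨h, hh, rfl⟩ := hW.exists_eq_measurable_comp
    exact H h hh.measurable⟩

end MeasureTheory

theorem MeasurableSpace.comap_eq_generateFrom_preimage_one {Ω : Type*} {S : Ω → ℝ}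
    (hS01 : ∀ ω, S ω = 0 ∨ S ω = 1) :
    MeasurableSpace.comap S inferInstance = MeasurableSpace.generateFrom {S ⁻¹' {1}} := by
  refine le_antisymm ?_ (MeasurableSpace.generateFrom_le ?_)
  · have hS : S = (S ⁻¹' {1}).indicator fun _ => 1 := by
      ext ω; rcases hS01 ω with h | h <;> simp [h]
    have hind : Measurable[MeasurableSpace.generateFrom {S ⁻¹' {1}}]
        ((S ⁻¹' {1}).indicator fun _ => (1 : ℝ)) :=
      measurable_const.indicator (MeasurableSpace.measurableSet_generateFrom rfl)
    rw [← hS] at hind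
    exact measurable_iff_comap_le.mp hind
  · rintro _ rfl
    exact ⟨{1}, measurableSet_singleton 1, rfl⟩

namespace ProbabilityTheory

theorem condIndep_generateFrom_singleton_iff {Ω : Type*} {m' m₁ mΩ : MeasurableSpace Ω}
    [StandardBorelSpace Ω] (hm' : m' ≤ mΩ) (hm₁ : m₁ ≤ mΩ) {P : Measure Ω} [IsFiniteMeasure P]
    {t : Set Ω} (ht : MeasurableSet t) :
    CondIndep m' m₁ (MeasurableSpace.generateFrom {t}) hm' P ↔
      ∀ s, MeasurableSet[m₁] s → P⟦s ∩ t|m'⟧ =ᵐ[P] P⟦s|m'⟧ * P⟦t|m'⟧ := by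
  have ht' : MeasurableSpace.generateFrom {t} ≤ mΩ := by
    rwa [MeasurableSpace.generateFrom_le_iff, Set.singleton_subset_iff]
  refine ⟨fun h s hs => (condIndep_iff _ _ _ hm' hm₁ ht' P).mp h s t hs
    (MeasurableSpace.measurableSet_generateFrom rfl), fun h => ?_⟩
  refine CondIndepSets.condIndep hm₁ ht' (@MeasurableSpace.isPiSystem_measurableSet Ω m₁)
    (IsPiSystem.singleton t) (@MeasurableSpace.generateFrom_measurableSet Ω m₁).symm rfl ?_
  refine (condIndepSets_iff _ _ _ _ (fun s hs => hm₁ s hs) (by simpa using ht) P).mpr ?_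
  rintro s _ hs rfl
  exact h s hs

theorem condIndepFun_iff_condExp_prodMk_ae_eq_condExp {Ω XF XZ : Type*}
    [MeasurableSpace Ω] [StandardBorelSpace Ω] [MeasurableSpace XF] [MeasurableSpace XZ]
    {P : Measure Ω} [IsFiniteMeasure P] {S : Ω → ℝ} (hS : Measurable S)
    (hS01 : ∀ ω, S ω = 0 ∨ S ω = 1) {F : Ω → XF} (hF : Measurable F) {Z : Ω → XZ}
    (hZ : Measurable Z) :
    CondIndepFun (MeasurableSpace.comap F inferInstance) hF.comap_le Z S P ↔
      P⟦S ⁻¹' {1}|MeasurableSpace.comap (fun ω => (Z ω, F ω)) inferInstance⟧ =ᵐ[P]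
        P⟦S ⁻¹' {1}|MeasurableSpace.comap F inferInstance⟧ := by
  have hB : MeasurableSet (S ⁻¹' {1}) := hS (measurableSet_singleton 1)
  have hZF : MeasurableSpace.comap (fun ω => (Z ω, F ω)) inferInstance =
      MeasurableSpace.comap Z inferInstance ⊔ MeasurableSpace.comap F inferInstance :=
    MeasurableSpace.comap_prodMk Z F
  rw [condIndepFun_iff_condIndep, MeasurableSpace.comap_eq_generateFrom_preimage_one hS01,
    condIndep_generateFrom_singleton_iff _ hZ.comap_le hB, hZF,
    condExp_sup_ae_eq_condExp_iff hZ.comap_le hF.comap_le ((integrable_const 1).indicator hB)]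
  simp only [Set.indicator_indicator]

end ProbabilityTheory

theorem binary_characterization_of_conditional_independence_general
    {Ω : Type*} [MeasurableSpace Ω] [StandardBorelSpace Ω]
    {XF XZ : Type*} [MeasurableSpace XF]
    [MeasurableSpace XZ]
    (P : Measure Ω) [IsProbabilityMeasure P]
    (S : Ω → ℝ) (hS : Measurable S) (hS01 : ∀ ω, S ω = 0 ∨ S ω = 1)
    (F : Ω → XF) (hF : Measurable F)
    (Z : Ω → XZ) (hZ : Measurable Z) :
    CondIndepFun (MeasurableSpace.comap F inferInstance) hF.comap_le Z S P ↔
      ∀ h : XZ × XF → ℝ, Measurable h → MemLp (fun ω => h (Z ω, F ω)) 2 P →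
        (P[fun ω => h (Z ω, F ω) | MeasurableSpace.comap F inferInstance] =ᵐ[P] 0) →
        ∫ ω, (if S ω = 1 then (1 : ℝ) else 0) * h (Z ω, F ω) ∂P = 0 := by
  have hF_ZF : Measurable[MeasurableSpace.comap (fun ω => (Z ω, F ω)) inferInstance] F :=
    measurable_snd.comp (comap_measurable _)
  have hB2 : MemLp ((S ⁻¹' {1}).indicator fun _ => (1 : ℝ)) 2 P :=
    memLp_indicator_const 2 (hS (measurableSet_singleton 1)) 1 (Or.inr (measure_ne_top P _))
  have hind : ∀ ω, (S ⁻¹' {1}).indicator (fun _ => (1 : ℝ)) ω = if S ω = 1 then 1 else 0 := by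
    intro ω
    by_cases h : S ω = 1 <;> simp [h]
  rw [condIndepFun_iff_condExp_prodMk_ae_eq_condExp hS hS01 hF hZ,
    condExp_ae_eq_condExp_iff_forall_integral_mul_eq_zero hF_ZF.comap_le (hZ.prodMk hF).comap_le
      hB2,
    forall_stronglyMeasurable_comap_iff]
  simp only [hind]

/-- **Characterization of conditional independence for a binary sensitive attribute.**
If `S` takes values in `{0,1}`, then `Z` and `S` are conditionally independent given `F` if and
only if, for every measurable `h̃ : 𝒳_Z × 𝒳_F → ℝ` with `E[h̃(Z,F)²] < ∞` and
`E[h̃(Z,F) | σ(F)] = 0` a.s., one has `E[𝟙{S=1} ⬝ h̃(Z,F)] = 0`. -/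
theorem binary_characterization_of_conditional_independence
    {Ω : Type*} [MeasurableSpace Ω] [StandardBorelSpace Ω]
    {XF XZ : Type*} [MeasurableSpace XF] [StandardBorelSpace XF]
    [MeasurableSpace XZ] [StandardBorelSpace XZ]
    (P : Measure Ω) [IsProbabilityMeasure P]
    (S : Ω → ℝ) (hS : Measurable S) (hS01 : ∀ ω, S ω = 0 ∨ S ω = 1)
    (F : Ω → XF) (hF : Measurable F)
    (Z : Ω → XZ) (hZ : Measurable Z) :
    CondIndepFun (MeasurableSpace.comap F inferInstance) hF.comap_le Z S P ↔
      ∀ h : XZ × XF → ℝ, Measurable h → MemLp (fun ω => h (Z ω, F ω)) 2 P →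
        (P[fun ω => h (Z ω, F ω) | MeasurableSpace.comap F inferInstance] =ᵐ[P] 0) →
        ∫ ω, (if S ω = 1 then (1 : ℝ) else 0) * h (Z ω, F ω) ∂P = 0 :=
  binary_characterization_of_conditional_independence_general P S hS hS01 F hF Z hZ
end

section
/- (Theorem: the absolute value in the fairness regularizer can be dropped.) Suppose S takes values in {0,1}. Then sup_{h ∈ H_ZF} |Q(h)| = sup_{h ∈ H_ZF} Q(h), where H_ZF is the set of measurable functions h : 𝒳_Z × 𝒳_F → ℝ with E[h(Z,F)²] < ∞ and 0 ≤ h(z,f) ≤ 1 for all (z,f), and Q(h) := E[𝟙{S=1} · P(S=0|F) · h(Z,F)] − E[𝟙{S=0} · P(S=1|F) · h(Z,F)]. -/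
open MeasureTheory ProbabilityTheory

/-!
Conditional expectation given `F` is self-adjoint, so
`E[𝟙{S=1} P(S=0|F)] = E[P(S=1|F) P(S=0|F)] = E[𝟙{S=0} P(S=1|F)]`, i.e. `Q 1 = 0`.
Since `Q` is linear, `Q (1 - h) = -Q h`, and `h ↦ 1 - h` maps `H_ZF` to itself; hence every
value `|Q h|` is attained by `Q` on `H_ZF`.
-/

section ConditionalExpectation

variable {Ω : Type*} {m m₀ : MeasurableSpace Ω} {μ : Measure Ω}

theorem integral_mul_eq_integral_condExp_mul (hm : m ≤ m₀) [SigmaFinite (μ.trim hm)]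
    {f g : Ω → ℝ} (hg : StronglyMeasurable[m] g) (hfg : Integrable (f * g) μ)
    (hf : Integrable f μ) :
    ∫ ω, f ω * g ω ∂μ = ∫ ω, μ[f | m] ω * g ω ∂μ :=
  (integral_condExp hm).symm.trans
    (integral_congr_ae (condExp_mul_of_stronglyMeasurable_right hg hfg hf))

theorem integral_mul_condExp_comm [IsFiniteMeasure μ] {a b : Ω → ℝ} (ha : MemLp a ⊤ μ)
    (hb : Integrable b μ) :
    ∫ ω, a ω * μ[b | m] ω ∂μ = ∫ ω, μ[a | m] ω * b ω ∂μ := by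
  by_cases hm : m ≤ m₀
  swap
  · simp [condExp_of_not_le hm]
  calc ∫ ω, a ω * μ[b | m] ω ∂μ
      = ∫ ω, μ[a | m] ω * μ[b | m] ω ∂μ :=
        integral_mul_eq_integral_condExp_mul hm stronglyMeasurable_condExp
          (integrable_condExp.mul_of_top_right ha) (ha.integrable le_top)
    _ = ∫ ω, μ[b | m] ω * μ[a | m] ω ∂μ := by simp_rw [mul_comm]
    _ = ∫ ω, b ω * μ[a | m] ω ∂μ :=
        (integral_mul_eq_integral_condExp_mul hm stronglyMeasurable_condExp
          (hb.mul_of_top_left (ha.condExp le_top)) hb).symm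
    _ = ∫ ω, μ[a | m] ω * b ω ∂μ := by simp_rw [mul_comm]

end ConditionalExpectation

theorem memLp_top_ite_eq {Ω β : Type*} [MeasurableSpace Ω] [MeasurableSpace β]
    [MeasurableSingletonClass β] [DecidableEq β] {μ : Measure Ω} {S : Ω → β}
    (hS : Measurable S) (s : β) :
    MemLp (fun ω => if S ω = s then (1 : ℝ) else 0) ⊤ μ :=
  memLp_top_of_bound
    (Measurable.ite (hS (measurableSet_singleton s)) measurable_const
      measurable_const).aestronglyMeasurable
    1 (ae_of_all _ fun ω => by split_ifs <;> simp)

theorem integral_mul_one_sub_sub_integral_mul_one_sub {Ω : Type*} [MeasurableSpace Ω]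
    {μ : Measure Ω} {u v g : Ω → ℝ} {C : ℝ} (hu : Integrable u μ) (hv : Integrable v μ)
    (huv : ∫ ω, u ω ∂μ = ∫ ω, v ω ∂μ) (hg : AEStronglyMeasurable g μ)
    (hg_bdd : ∀ᵐ ω ∂μ, ‖g ω‖ ≤ C) :
    ∫ ω, u ω * (1 - g ω) ∂μ - ∫ ω, v ω * (1 - g ω) ∂μ
      = -(∫ ω, u ω * g ω ∂μ - ∫ ω, v ω * g ω ∂μ) := by
  simp_rw [mul_one_sub]
  rw [integral_sub hu (hu.mul_bdd hg hg_bdd), integral_sub hv (hv.mul_bdd hg hg_bdd), huv]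
  ring

theorem iSup₂_coe_abs_eq_iSup₂_coe {α : Type*} {p : α → Prop} {f : α → ℝ}
    (hneg : ∀ x, p x → ∃ y, p y ∧ f y = -f x) :
    ⨆ (x) (_ : p x), ((|f x| : ℝ) : EReal) = ⨆ (x) (_ : p x), ((f x : ℝ) : EReal) := by
  refine le_antisymm (iSup₂_le fun x hx => ?_)
    (iSup₂_mono fun x _ => EReal.coe_le_coe_iff.2 (le_abs_self _))
  rcases abs_choice (f x) with habs | habs
  · rw [habs]
    exact le_iSup₂ (f := fun x (_ : p x) => ((f x : ℝ) : EReal)) x hx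
  · obtain ⟨y, hy, hfy⟩ := hneg x hx
    rw [habs, ← hfy]
    exact le_iSup₂ (f := fun x (_ : p x) => ((f x : ℝ) : EReal)) y hy

theorem sup_abs_Q_eq_sup_Q_general
    {Ω : Type*} [MeasurableSpace Ω]
    {XF XZ : Type*} [MeasurableSpace XF] [MeasurableSpace XZ]
    (P : Measure Ω) [IsProbabilityMeasure P]
    (S : Ω → ℝ) (hS : Measurable S)
    (F : Ω → XF)
    (Z : Ω → XZ)
    (p0 p1 : Ω → ℝ)
    (hp0 : p0 =ᵐ[P]
      P[fun ω => if S ω = 0 then (1 : ℝ) else 0 | MeasurableSpace.comap F inferInstance])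
    (hp1 : p1 =ᵐ[P]
      P[fun ω => if S ω = 1 then (1 : ℝ) else 0 | MeasurableSpace.comap F inferInstance])
    (Q : (XZ × XF → ℝ) → ℝ)
    (hQ : ∀ h : XZ × XF → ℝ,
      Q h = (∫ ω, (if S ω = 1 then (1 : ℝ) else 0) * p0 ω * h (Z ω, F ω) ∂P)
        - ∫ ω, (if S ω = 0 then (1 : ℝ) else 0) * p1 ω * h (Z ω, F ω) ∂P) :
    (⨆ (h : XZ × XF → ℝ) (_ : Measurable h ∧ MemLp (fun ω => h (Z ω, F ω)) 2 P ∧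
        ∀ p, 0 ≤ h p ∧ h p ≤ 1), ((|Q h| : ℝ) : EReal))
    = ⨆ (h : XZ × XF → ℝ) (_ : Measurable h ∧ MemLp (fun ω => h (Z ω, F ω)) 2 P ∧
        ∀ p, 0 ≤ h p ∧ h p ≤ 1), ((Q h : ℝ) : EReal) := by
  have hi0 := memLp_top_ite_eq (μ := P) hS 0
  have hi1 := memLp_top_ite_eq (μ := P) hS 1
  have hp0_int : Integrable p0 P := integrable_condExp.congr hp0.symm
  have hp1_int : Integrable p1 P := integrable_condExp.congr hp1.symm
  have hQ_one : ∫ ω, (if S ω = 1 then (1 : ℝ) else 0) * p0 ω ∂P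
      = ∫ ω, (if S ω = 0 then (1 : ℝ) else 0) * p1 ω ∂P := by
    rw [integral_congr_ae (hp0.mono fun ω h => by rw [h]),
      integral_mul_condExp_comm hi1 (hi0.integrable le_top),
      integral_congr_ae (hp1.mono fun ω h => by rw [← h, mul_comm])]
  refine iSup₂_coe_abs_eq_iSup₂_coe fun h ⟨hh_meas, hh_memLp, hh_bdd⟩ => ?_
  refine ⟨fun p => 1 - h p, ⟨measurable_const.sub hh_meas, (memLp_const 1).sub hh_memLp,
    fun p => ⟨by linarith [hh_bdd p], by linarith [hh_bdd p]⟩⟩, ?_⟩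
  have hh_norm : ∀ ω, ‖h (Z ω, F ω)‖ ≤ 1 := fun ω =>
    abs_le.2 ⟨by linarith [hh_bdd (Z ω, F ω)], (hh_bdd (Z ω, F ω)).2⟩
  rw [hQ, hQ h]
  exact integral_mul_one_sub_sub_integral_mul_one_sub (hp0_int.mul_of_top_right hi1)
    (hp1_int.mul_of_top_right hi0) hQ_one hh_memLp.aestronglyMeasurable (ae_of_all _ hh_norm)

/-- **The absolute value in the fairness regularizer can be dropped:**
`sup_{h ∈ H_ZF} |Q(h)| = sup_{h ∈ H_ZF} Q(h)` (suprema in the extended reals), where `H_ZF` is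
the set of measurable `h : 𝒳_Z × 𝒳_F → ℝ` with `E[h(Z,F)²] < ∞` and `0 ≤ h ≤ 1` pointwise, and
`Q(h) = E[𝟙{S=1} ⬝ P(S=0|F) ⬝ h(Z,F)] − E[𝟙{S=0} ⬝ P(S=1|F) ⬝ h(Z,F)]`. -/
theorem sup_abs_Q_eq_sup_Q
    {Ω : Type*} [MeasurableSpace Ω]
    {XF XZ : Type*} [MeasurableSpace XF] [MeasurableSpace XZ]
    (P : Measure Ω) [IsProbabilityMeasure P]
    (S : Ω → ℝ) (hS : Measurable S) (hS01 : ∀ ω, S ω = 0 ∨ S ω = 1)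
    (F : Ω → XF) (hF : Measurable F)
    (Z : Ω → XZ) (hZ : Measurable Z)
    (p0 p1 : Ω → ℝ)
    (hp0 : p0 =ᵐ[P]
      P[fun ω => if S ω = 0 then (1 : ℝ) else 0 | MeasurableSpace.comap F inferInstance])
    (hp1 : p1 =ᵐ[P]
      P[fun ω => if S ω = 1 then (1 : ℝ) else 0 | MeasurableSpace.comap F inferInstance])
    (Q : (XZ × XF → ℝ) → ℝ)
    (hQ : ∀ h : XZ × XF → ℝ,
      Q h = (∫ ω, (if S ω = 1 then (1 : ℝ) else 0) * p0 ω * h (Z ω, F ω) ∂P)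
        - ∫ ω, (if S ω = 0 then (1 : ℝ) else 0) * p1 ω * h (Z ω, F ω) ∂P) :
    (⨆ (h : XZ × XF → ℝ) (_ : Measurable h ∧ MemLp (fun ω => h (Z ω, F ω)) 2 P ∧
        ∀ p, 0 ≤ h p ∧ h p ≤ 1), ((|Q h| : ℝ) : EReal))
    = ⨆ (h : XZ × XF → ℝ) (_ : Measurable h ∧ MemLp (fun ω => h (Z ω, F ω)) 2 P ∧
        ∀ p, 0 ≤ h p ∧ h p ≤ 1), ((Q h : ℝ) : EReal) :=
  sup_abs_Q_eq_sup_Q_general P S hS F Z p0 p1 hp0 hp1 Q hQ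
end

section
/- (Vanishing of the regularizer implies conditional fairness.) Suppose S takes values in {0,1}. If L_fair(Z,F,S) := sup_{h ∈ H_ZF} |Q(h)| = 0, then Z and S are conditionally independent given F. Here H_ZF is the set of measurable functions h : 𝒳_Z × 𝒳_F → ℝ with E[h(Z,F)²] < ∞ and 0 ≤ h(z,f) ≤ 1 for all (z,f), and Q(h) := E[𝟙{S=1} · P(S=0|F) · h(Z,F)] − E[𝟙{S=0} · P(S=1|F) · h(Z,F)]. -/
/-!
Since `S` is binary, `𝟙{S=0} = 1 - 𝟙{S=1}` and `P(S=0|F) = 1 - P(S=1|F)`, so the regularizer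
collapses to `Q(h) = E[𝟙{S=1} h(Z,F)] - E[P(S=1|F) h(Z,F)]`. Testing `Q = 0` against indicators
`h = 𝟙_{s ×ˢ B}` of measurable rectangles gives `E[𝟙{S=1} 𝟙{Z ∈ s} | F] = P(S=1|F) P(Z ∈ s|F)`.
As `σ(S)` is generated by the single event `{S = 1}`, this factorisation on a π-system
is conditional independence.
-/

open MeasureTheory ProbabilityTheory

lemma eq_zero_of_iSup₂_abs_eq_zero {ι : Type*} {p : ι → Prop} {f : ι → ℝ}
    (h : (⨆ (i) (_ : p i), ((|f i| : ℝ) : EReal)) = 0) {i : ι} (hi : p i) : f i = 0 := by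
  have : ((|f i| : ℝ) : EReal) ≤ 0 :=
    h ▸ le_iSup₂ (f := fun i (_ : p i) => ((|f i| : ℝ) : EReal)) i hi
  exact abs_nonpos_iff.mp (EReal.coe_nonpos.mp this)

lemma norm_indicator_one_le {α : Type*} (s : Set α) (a : α) : ‖s.indicator (1 : α → ℝ) a‖ ≤ 1 :=
  (norm_indicator_le_norm_self _ _).trans_eq norm_one

lemma indicator_one_mem_unitInterval {α : Type*} (s : Set α) (a : α) :
    0 ≤ s.indicator (1 : α → ℝ) a ∧ s.indicator (1 : α → ℝ) a ≤ 1 :=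
  ⟨Set.indicator_nonneg (fun _ _ => zero_le_one) a,
    Set.indicator_le_self' (fun _ _ => zero_le_one) a⟩

section

variable {Ω : Type*} {m mΩ : MeasurableSpace Ω} {μ : Measure Ω}

lemma comap_le_generateFrom_preimage_one {S : Ω → ℝ} (hS01 : ∀ ω, S ω = 0 ∨ S ω = 1) :
    MeasurableSpace.comap S inferInstance ≤ MeasurableSpace.generateFrom {S ⁻¹' {1}} := by
  rintro _ ⟨t, -, rfl⟩
  have hA : MeasurableSet[MeasurableSpace.generateFrom {S ⁻¹' {1}}] (S ⁻¹' {1}) :=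
    MeasurableSpace.measurableSet_generateFrom rfl
  have : S ⁻¹' t = (S ⁻¹' {1} ∩ {_ω | (1 : ℝ) ∈ t}) ∪ ((S ⁻¹' {1})ᶜ ∩ {_ω | (0 : ℝ) ∈ t}) := by
    ext ω; rcases hS01 ω with h | h <;> simp [h]
  rw [this]
  exact (hA.inter (.const _)).union (hA.compl.inter (.const _))

theorem condIndepFun_of_condExp_inter_preimage_one_eq_mul [StandardBorelSpace Ω]
    [IsFiniteMeasure μ] (hm : m ≤ mΩ) {β : Type*} [MeasurableSpace β] {Z : Ω → β} {S : Ω → ℝ}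
    (hZ : Measurable Z) (hS : Measurable S) (hS01 : ∀ ω, S ω = 0 ∨ S ω = 1)
    (h : ∀ s, MeasurableSet s →
      μ⟦Z ⁻¹' s ∩ S ⁻¹' {1} | m⟧ =ᵐ[μ] μ⟦Z ⁻¹' s | m⟧ * μ⟦S ⁻¹' {1} | m⟧) :
    CondIndepFun m hm Z S μ := by
  have hA : MeasurableSet (S ⁻¹' {1}) := hS (measurableSet_singleton 1)
  rw [condIndepFun_iff_condIndep]
  refine condIndep_of_condIndep_of_le_right ?_ (comap_le_generateFrom_preimage_one hS01)
  refine CondIndepSets.condIndep hZ.comap_le (MeasurableSpace.generateFrom_le (by simpa))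
    (@MeasurableSpace.isPiSystem_measurableSet Ω (.comap Z inferInstance)) (.singleton _)
    (@MeasurableSpace.generateFrom_measurableSet Ω (.comap Z inferInstance)).symm rfl ?_
  refine (condIndepSets_iff m hm _ _ (fun s hs => hZ.comap_le s hs) (by simpa) μ).2 ?_
  rintro _ t ⟨s, hs, rfl⟩ rfl
  exact h s hs

lemma condExp_compl_ae_eq_one_sub [IsFiniteMeasure μ] (hm : m ≤ mΩ) {A : Set Ω}
    (hA : MeasurableSet A) : μ⟦Aᶜ | m⟧ =ᵐ[μ] fun ω => 1 - (μ⟦A | m⟧) ω := by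
  rw [Set.indicator_compl]
  filter_upwards
    [condExp_sub (integrable_const (1 : ℝ)) ((integrable_const (1 : ℝ)).indicator hA) m] with ω hω
  rw [hω, Pi.sub_apply, condExp_const hm]

lemma integral_indicator_mul_sub_integral_compl_indicator_mul [IsFiniteMeasure μ] (hm : m ≤ mΩ)
    {A : Set Ω} (hA : MeasurableSet A) {p₀ p₁ k : Ω → ℝ}
    (hp₀ : p₀ =ᵐ[μ] μ⟦Aᶜ | m⟧) (hp₁ : p₁ =ᵐ[μ] μ⟦A | m⟧)
    (hk : AEStronglyMeasurable k μ) {c : ℝ} (hk_bd : ∀ᵐ ω ∂μ, ‖k ω‖ ≤ c) :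
    ∫ ω, A.indicator 1 ω * p₀ ω * k ω ∂μ - ∫ ω, Aᶜ.indicator 1 ω * p₁ ω * k ω ∂μ
      = ∫ ω, A.indicator 1 ω * k ω ∂μ - ∫ ω, (μ⟦A | m⟧) ω * k ω ∂μ := by
  have hmul : ∀ {B : Set Ω}, MeasurableSet B → ∀ {p : Ω → ℝ}, Integrable p μ →
      Integrable (fun ω => B.indicator 1 ω * p ω * k ω) μ := fun hB _ hp =>
    (hp.bdd_mul (aestronglyMeasurable_const.indicator hB)
      (ae_of_all _ (norm_indicator_one_le _))).mul_bdd hk hk_bd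
  have hAk : Integrable (fun ω => A.indicator 1 ω * k ω) μ :=
    ((integrable_const (1 : ℝ)).indicator hA).mul_bdd hk hk_bd
  rw [← integral_sub (hmul hA (integrable_condExp.congr hp₀.symm))
      (hmul hA.compl (integrable_condExp.congr hp₁.symm)),
    ← integral_sub hAk (integrable_condExp.mul_bdd hk hk_bd)]
  refine integral_congr_ae ?_
  filter_upwards [hp₀, hp₁, condExp_compl_ae_eq_one_sub hm hA] with ω h₀ h₁ hc
  rw [h₀, h₁, hc, Set.indicator_compl, Pi.sub_apply, Pi.one_apply]
  ring

lemma condExp_mul_ae_eq_mul_of_forall_setIntegral_eq [IsFiniteMeasure μ] (hm : m ≤ mΩ)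
    {f g : Ω → ℝ} (hf : Integrable f μ) (hg : AEStronglyMeasurable g μ) {c : ℝ}
    (hg_bd : ∀ᵐ ω ∂μ, ‖g ω‖ ≤ c)
    (h : ∀ s, MeasurableSet[m] s → ∫ ω in s, f ω * g ω ∂μ = ∫ ω in s, μ[f | m] ω * g ω ∂μ) :
    μ[f * g | m] =ᵐ[μ] μ[f | m] * μ[g | m] := by
  have hcg : Integrable (μ[f | m] * g) μ := integrable_condExp.mul_bdd hg hg_bd
  have hpull : μ[μ[f | m] * g | m] =ᵐ[μ] μ[f | m] * μ[g | m] :=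
    condExp_mul_of_stronglyMeasurable_left stronglyMeasurable_condExp hcg
      (Integrable.of_bound hg c hg_bd)
  refine (ae_eq_condExp_of_forall_setIntegral_eq hm (hf.mul_bdd hg hg_bd)
    (fun s _ _ => (integrable_condExp.congr hpull).integrableOn) (fun s hs _ => ?_)
    (stronglyMeasurable_condExp.mul stronglyMeasurable_condExp).aestronglyMeasurable).symm
  calc ∫ ω in s, (μ[f | m] * μ[g | m]) ω ∂μ
      = ∫ ω in s, μ[μ[f | m] * g | m] ω ∂μ := setIntegral_congr_ae (hm s hs) (by
        filter_upwards [hpull] with ω hω _ using hω.symm)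
    _ = ∫ ω in s, μ[f | m] ω * g ω ∂μ := setIntegral_condExp hm hcg hs
    _ = ∫ ω in s, (f * g) ω ∂μ := (h s hs).symm

lemma integral_mul_indicator_prod_one_eq_setIntegral {β γ : Type*} [MeasurableSpace γ]
    {Z : Ω → β} {F : Ω → γ} (hF : Measurable F) (s : Set β) {B : Set γ} (hB : MeasurableSet B)
    (q : Ω → ℝ) :
    ∫ ω, q ω * (s ×ˢ B).indicator 1 (Z ω, F ω) ∂μ
      = ∫ ω in F ⁻¹' B, q ω * (Z ⁻¹' s).indicator 1 ω ∂μ := by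
  rw [← integral_indicator (hF hB)]
  congr 1 with ω
  by_cases hZs : Z ω ∈ s <;> by_cases hFB : F ω ∈ B <;> simp [hZs, hFB]

end

theorem regularizer_eq_zero_implies_condIndep_general
    {Ω : Type*} [MeasurableSpace Ω] [StandardBorelSpace Ω]
    {XF XZ : Type*} [MeasurableSpace XF]
    [MeasurableSpace XZ]
    (P : Measure Ω) [IsProbabilityMeasure P]
    (S : Ω → ℝ) (hS : Measurable S) (hS01 : ∀ ω, S ω = 0 ∨ S ω = 1)
    (F : Ω → XF) (hF : Measurable F)
    (Z : Ω → XZ) (hZ : Measurable Z)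
    (p0 p1 : Ω → ℝ)
    (hp0 : p0 =ᵐ[P]
      P[fun ω => if S ω = 0 then (1 : ℝ) else 0 | MeasurableSpace.comap F inferInstance])
    (hp1 : p1 =ᵐ[P]
      P[fun ω => if S ω = 1 then (1 : ℝ) else 0 | MeasurableSpace.comap F inferInstance])
    (Q : (XZ × XF → ℝ) → ℝ)
    (hQ : ∀ h : XZ × XF → ℝ,
      Q h = (∫ ω, (if S ω = 1 then (1 : ℝ) else 0) * p0 ω * h (Z ω, F ω) ∂P)
        - ∫ ω, (if S ω = 0 then (1 : ℝ) else 0) * p1 ω * h (Z ω, F ω) ∂P)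
    (hLfair : (⨆ (h : XZ × XF → ℝ) (_ : Measurable h ∧ MemLp (fun ω => h (Z ω, F ω)) 2 P ∧
        ∀ p, 0 ≤ h p ∧ h p ≤ 1), ((|Q h| : ℝ) : EReal)) = 0) :
    CondIndepFun (MeasurableSpace.comap F inferInstance) hF.comap_le Z S P := by
  set A := S ⁻¹' {1}
  have hA : MeasurableSet A := hS (measurableSet_singleton 1)
  have hT : (fun ω => if S ω = 1 then (1 : ℝ) else 0) = A.indicator 1 := by
    ext ω; rcases hS01 ω with h | h <;> simp [A, h]
  have hT0 : (fun ω => if S ω = 0 then (1 : ℝ) else 0) = Aᶜ.indicator 1 := by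
    ext ω; rcases hS01 ω with h | h <;> simp [A, h]
  rw [hT0] at hp0
  rw [hT] at hp1
  simp only [funext_iff.mp hT, funext_iff.mp hT0] at hQ
  refine condIndepFun_of_condExp_inter_preimage_one_eq_mul _ hZ hS hS01 fun s hs => ?_
  rw [Set.inter_comm, show (fun _ : Ω => (1 : ℝ)) = 1 from rfl, Set.inter_indicator_one]
  refine (condExp_mul_ae_eq_mul_of_forall_setIntegral_eq hF.comap_le
    ((integrable_const (1 : ℝ)).indicator hA) (aestronglyMeasurable_const.indicator (hZ hs))
    (ae_of_all _ (norm_indicator_one_le _)) ?_).trans (.of_eq (mul_comm _ _))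
  rintro _ ⟨B, hB, rfl⟩
  have hk : Measurable fun ω => (s ×ˢ B).indicator (1 : XZ × XF → ℝ) (Z ω, F ω) :=
    (measurable_one.indicator (hs.prod hB)).comp (hZ.prodMk hF)
  have hQB := eq_zero_of_iSup₂_abs_eq_zero hLfair (i := (s ×ˢ B).indicator 1)
    ⟨measurable_one.indicator (hs.prod hB),
      MemLp.of_bound hk.aestronglyMeasurable 1 (ae_of_all _ fun _ => norm_indicator_one_le _ _),
      indicator_one_mem_unitInterval _⟩
  rwa [hQ, integral_indicator_mul_sub_integral_compl_indicator_mul hF.comap_le hA hp0 hp1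
    hk.aestronglyMeasurable (ae_of_all _ fun _ => norm_indicator_one_le _ _), sub_eq_zero,
    integral_mul_indicator_prod_one_eq_setIntegral hF s hB,
    integral_mul_indicator_prod_one_eq_setIntegral hF s hB] at hQB

/-- **Vanishing of the regularizer implies conditional fairness.**
If `S` takes values in `{0,1}` and `L_fair(Z,F,S) = sup_{h ∈ H_ZF} |Q(h)| = 0` (supremum in the
extended reals), then `Z` and `S` are conditionally independent given `F`. Here `H_ZF` is the
set of measurable `h : 𝒳_Z × 𝒳_F → ℝ` with `E[h(Z,F)²] < ∞` and `0 ≤ h ≤ 1` pointwise, and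
`Q(h) = E[𝟙{S=1} ⬝ P(S=0|F) ⬝ h(Z,F)] − E[𝟙{S=0} ⬝ P(S=1|F) ⬝ h(Z,F)]`. -/
theorem regularizer_eq_zero_implies_condIndep
    {Ω : Type*} [MeasurableSpace Ω] [StandardBorelSpace Ω]
    {XF XZ : Type*} [MeasurableSpace XF] [StandardBorelSpace XF]
    [MeasurableSpace XZ] [StandardBorelSpace XZ]
    (P : Measure Ω) [IsProbabilityMeasure P]
    (S : Ω → ℝ) (hS : Measurable S) (hS01 : ∀ ω, S ω = 0 ∨ S ω = 1)
    (F : Ω → XF) (hF : Measurable F)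
    (Z : Ω → XZ) (hZ : Measurable Z)
    (p0 p1 : Ω → ℝ)
    (hp0 : p0 =ᵐ[P]
      P[fun ω => if S ω = 0 then (1 : ℝ) else 0 | MeasurableSpace.comap F inferInstance])
    (hp1 : p1 =ᵐ[P]
      P[fun ω => if S ω = 1 then (1 : ℝ) else 0 | MeasurableSpace.comap F inferInstance])
    (Q : (XZ × XF → ℝ) → ℝ)
    (hQ : ∀ h : XZ × XF → ℝ,
      Q h = (∫ ω, (if S ω = 1 then (1 : ℝ) else 0) * p0 ω * h (Z ω, F ω) ∂P)
        - ∫ ω, (if S ω = 0 then (1 : ℝ) else 0) * p1 ω * h (Z ω, F ω) ∂P)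
    (hLfair : (⨆ (h : XZ × XF → ℝ) (_ : Measurable h ∧ MemLp (fun ω => h (Z ω, F ω)) 2 P ∧
        ∀ p, 0 ≤ h p ∧ h p ≤ 1), ((|Q h| : ℝ) : EReal)) = 0) :
    CondIndepFun (MeasurableSpace.comap F inferInstance) hF.comap_le Z S P :=
  regularizer_eq_zero_implies_condIndep_general P S hS hS01 F hF Z hZ p0 p1 hp0 hp1 Q hQ hLfair
end

section
/- (Theorem: the L2 surrogate regularizer upper-bounds the fairness regularizer.) Suppose S takes values in {0,1}. Then L'_fair ≥ L_fair, where L_fair := sup_{h ∈ H_ZF} |Q(h)|, L'_fair := sup_{h ∈ H_ZF} Q'(h), C := E[𝟙{S=1} · P(S=0|F)], Q(h) := E[𝟙{S=1} · P(S=0|F) · h(Z,F)] − E[𝟙{S=0} · P(S=1|F) · h(Z,F)], Q'(h) := C − E[𝟙{S=1} · P(S=0|F) · (1 − h(Z,F))²] − E[𝟙{S=0} · P(S=1|F) · h(Z,F)²], and H_ZF is the set of measurable functions h : 𝒳_Z × 𝒳_F → ℝ with E[h(Z,F)²] < ∞ and 0 ≤ h(z,f) ≤ 1 for all (z,f). 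-/
/-!
Write `a = 𝟙{S=1}·P(S=0|F)`, `b = 𝟙{S=0}·P(S=1|F)` and `H = h(Z,F) ∈ [0,1]`. Pointwise,
`a - a(1-H)² - bH² - (aH - bH) = (a+b)·H(1-H) ≥ 0`, so `Q(h) ≤ Q'(h)`. Since conditional
expectation is self-adjoint, `E[a] = E[P(S=1|F)·P(S=0|F)] = E[b]`; hence `Q'(1-h)` is the surrogate
with the roles of `a` and `b` exchanged, which bounds `-Q(h)` by the same pointwise identity.
Thus `|Q(h)| ≤ max (Q'(h), Q'(1-h))`, and `H_ZF` is closed under `h ↦ 1 - h`.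
-/

open MeasureTheory

namespace MeasureTheory

variable {Ω : Type*} {m m₀ : MeasurableSpace Ω} {μ : Measure Ω}

theorem integral_mul_condExp_eq_integral_condExp_mul_condExp (hm : m ≤ m₀) [IsFiniteMeasure μ]
    {f g : Ω → ℝ} (hf : Integrable f μ) {R : ℝ} (hg : ∀ᵐ ω ∂μ, |g ω| ≤ R) :
    ∫ ω, f ω * μ[g | m] ω ∂μ = ∫ ω, μ[f | m] ω * μ[g | m] ω ∂μ :=
  calc ∫ ω, f ω * μ[g | m] ω ∂μ = ∫ ω, (μ[g | m] * f) ω ∂μ := by simp only [Pi.mul_apply, mul_comm]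
    _ = ∫ ω, μ[μ[g | m] * f | m] ω ∂μ := (integral_condExp hm).symm
    _ = ∫ ω, μ[g | m] ω * μ[f | m] ω ∂μ := integral_congr_ae <|
      condExp_stronglyMeasurable_mul_of_bound hm stronglyMeasurable_condExp hf R
        (by simpa only [Real.norm_eq_abs] using ae_bdd_abs_condExp_of_ae_bdd_abs hg)
    _ = ∫ ω, μ[f | m] ω * μ[g | m] ω ∂μ := by simp only [mul_comm]

theorem integral_mul_condExp_comm (hm : m ≤ m₀) [IsFiniteMeasure μ] {f g : Ω → ℝ}
    (hf : Integrable f μ) (hg : Integrable g μ) {R : ℝ} (hfR : ∀ᵐ ω ∂μ, |f ω| ≤ R)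
    (hgR : ∀ᵐ ω ∂μ, |g ω| ≤ R) :
    ∫ ω, f ω * μ[g | m] ω ∂μ = ∫ ω, g ω * μ[f | m] ω ∂μ := by
  rw [integral_mul_condExp_eq_integral_condExp_mul_condExp hm hf hgR,
    integral_mul_condExp_eq_integral_condExp_mul_condExp hm hg hfR]
  simp only [mul_comm]

end MeasureTheory

section Regularizers

variable {Ω : Type*} [MeasurableSpace Ω] (μ : Measure Ω)

/-- `Q(h)`, with weights `a`, `b` and `H = h(Z,F)`. -/
noncomputable def fairGap (a b H : Ω → ℝ) : ℝ :=
  ∫ ω, a ω * H ω ∂μ - ∫ ω, b ω * H ω ∂μ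

/-- `Q'(h)`, with weights `a`, `b` and `H = h(Z,F)`. -/
noncomputable def l2Surrogate (a b H : Ω → ℝ) : ℝ :=
  ∫ ω, a ω ∂μ - ∫ ω, a ω * (1 - H ω) ^ 2 ∂μ - ∫ ω, b ω * H ω ^ 2 ∂μ

variable {μ} {a b H : Ω → ℝ}

theorem fairGap_swap : fairGap μ b a H = -fairGap μ a b H := by
  simp only [fairGap, neg_sub]

theorem l2Surrogate_one_sub (hab : ∫ ω, a ω ∂μ = ∫ ω, b ω ∂μ) :
    l2Surrogate μ a b (fun ω => 1 - H ω) = l2Surrogate μ b a H := by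
  simp only [l2Surrogate, sub_sub_cancel, hab]
  ring

theorem fairGap_le_l2Surrogate (ha : Integrable a μ) (hb : Integrable b μ) (ha0 : 0 ≤ᵐ[μ] a)
    (hb0 : 0 ≤ᵐ[μ] b) (hH : AEStronglyMeasurable H μ) (hH01 : ∀ᵐ ω ∂μ, H ω ∈ Set.Icc 0 1) :
    fairGap μ a b H ≤ l2Surrogate μ a b H := by
  have hHb : ∀ᵐ ω ∂μ, ‖H ω‖ ≤ 1 := hH01.mono fun ω hω => by
    rw [Real.norm_of_nonneg hω.1]; exact hω.2
  have hH2b : ∀ᵐ ω ∂μ, ‖H ω ^ 2‖ ≤ 1 := hHb.mono fun ω hω => by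
    rw [norm_pow]; exact pow_le_one₀ (norm_nonneg _) hω
  have h1Hb : ∀ᵐ ω ∂μ, ‖(1 - H ω) ^ 2‖ ≤ 1 := hH01.mono fun ω hω => by
    rw [norm_pow, Real.norm_of_nonneg (sub_nonneg.2 hω.2)]
    exact pow_le_one₀ (sub_nonneg.2 hω.2) (sub_le_self _ hω.1)
  have haH : Integrable (fun ω => a ω * H ω) μ := ha.mul_bdd hH hHb
  have hbH : Integrable (fun ω => b ω * H ω) μ := hb.mul_bdd hH hHb
  have hbH2 : Integrable (fun ω => b ω * H ω ^ 2) μ := hb.mul_bdd (hH.pow 2) hH2b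
  have ha1H : Integrable (fun ω => a ω * (1 - H ω) ^ 2) μ :=
    ha.mul_bdd ((aestronglyMeasurable_const.sub hH).pow 2) h1Hb
  have hgap : l2Surrogate μ a b H - fairGap μ a b H
      = ∫ ω, (a ω + b ω) * (H ω * (1 - H ω)) ∂μ := by
    rw [l2Surrogate, fairGap, ← integral_sub ha ha1H, ← integral_sub, ← integral_sub haH hbH,
      ← integral_sub]
    · congr 1 with ω
      ring
    all_goals fun_prop
  have hnonneg : 0 ≤ ∫ ω, (a ω + b ω) * (H ω * (1 - H ω)) ∂μ := by
    refine integral_nonneg_of_ae ?_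
    filter_upwards [ha0, hb0, hH01] with ω ha0 hb0 hH
    exact mul_nonneg (add_nonneg ha0 hb0) (mul_nonneg hH.1 (sub_nonneg.2 hH.2))
  linarith

theorem abs_fairGap_le_max_l2Surrogate (ha : Integrable a μ) (hb : Integrable b μ)
    (ha0 : 0 ≤ᵐ[μ] a) (hb0 : 0 ≤ᵐ[μ] b) (hab : ∫ ω, a ω ∂μ = ∫ ω, b ω ∂μ)
    (hH : AEStronglyMeasurable H μ) (hH01 : ∀ᵐ ω ∂μ, H ω ∈ Set.Icc 0 1) :
    |fairGap μ a b H| ≤ max (l2Surrogate μ a b H) (l2Surrogate μ a b fun ω => 1 - H ω) := by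
  refine abs_le'.2 ⟨le_max_of_le_left (fairGap_le_l2Surrogate ha hb ha0 hb0 hH hH01), ?_⟩
  rw [← fairGap_swap, l2Surrogate_one_sub hab]
  exact le_max_of_le_right (fairGap_le_l2Surrogate hb ha hb0 ha0 hH hH01)

end Regularizers

theorem abs_ite_one_zero_le (p : Prop) [Decidable p] : |if p then (1 : ℝ) else 0| ≤ 1 := by
  split_ifs <;> simp

theorem ite_one_zero_nonneg (p : Prop) [Decidable p] : 0 ≤ if p then (1 : ℝ) else 0 := by
  split_ifs <;> simp

theorem integrable_ite_eq_one_zero {Ω : Type*} [MeasurableSpace Ω] {μ : Measure Ω}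
    [IsFiniteMeasure μ] {S : Ω → ℝ} (hS : Measurable S) (s : ℝ) :
    Integrable (fun ω => if S ω = s then (1 : ℝ) else 0) μ :=
  .of_bound (Measurable.ite (hS (measurableSet_singleton s)) measurable_const
    measurable_const).aestronglyMeasurable 1 (ae_of_all _ fun _ => abs_ite_one_zero_le _)

theorem one_sub_mem_admissible {Ω X : Type*} [MeasurableSpace Ω] [MeasurableSpace X]
    {μ : Measure Ω} [IsFiniteMeasure μ] {G : Ω → X} {h : X → ℝ}
    (hh : Measurable h ∧ MemLp (fun ω => h (G ω)) 2 μ ∧ ∀ p, 0 ≤ h p ∧ h p ≤ 1) :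
    Measurable (fun p => 1 - h p) ∧ MemLp (fun ω => 1 - h (G ω)) 2 μ ∧
      ∀ p, 0 ≤ 1 - h p ∧ 1 - h p ≤ 1 :=
  ⟨measurable_const.sub hh.1, (memLp_const 1).sub hh.2.1,
    fun p => ⟨sub_nonneg.2 (hh.2.2 p).2, sub_le_self _ (hh.2.2 p).1⟩⟩

theorem L2_surrogate_regularizer_upper_bounds_fairness_regularizer_general
    {Ω : Type*} [MeasurableSpace Ω]
    {XF XZ : Type*} [MeasurableSpace XF] [MeasurableSpace XZ]
    (P : Measure Ω) [IsProbabilityMeasure P]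
    (S : Ω → ℝ) (hS : Measurable S)
    (F : Ω → XF) (hF : Measurable F)
    (Z : Ω → XZ)
    (p0 p1 : Ω → ℝ)
    (hp0 : p0 =ᵐ[P]
      P[fun ω => if S ω = 0 then (1 : ℝ) else 0 | MeasurableSpace.comap F inferInstance])
    (hp1 : p1 =ᵐ[P]
      P[fun ω => if S ω = 1 then (1 : ℝ) else 0 | MeasurableSpace.comap F inferInstance])
    (Q Q' : (XZ × XF → ℝ) → ℝ)
    (hQ : ∀ h : XZ × XF → ℝ,
      Q h = (∫ ω, (if S ω = 1 then (1 : ℝ) else 0) * p0 ω * h (Z ω, F ω) ∂P)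
        - ∫ ω, (if S ω = 0 then (1 : ℝ) else 0) * p1 ω * h (Z ω, F ω) ∂P)
    (hQ' : ∀ h : XZ × XF → ℝ,
      Q' h = (∫ ω, (if S ω = 1 then (1 : ℝ) else 0) * p0 ω ∂P)
        - (∫ ω, (if S ω = 1 then (1 : ℝ) else 0) * p0 ω * (1 - h (Z ω, F ω)) ^ 2 ∂P)
        - ∫ ω, (if S ω = 0 then (1 : ℝ) else 0) * p1 ω * h (Z ω, F ω) ^ 2 ∂P) :
    (⨆ (h : XZ × XF → ℝ) (_ : Measurable h ∧ MemLp (fun ω => h (Z ω, F ω)) 2 P ∧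
        ∀ p, 0 ≤ h p ∧ h p ≤ 1), ((Q' h : ℝ) : EReal))
    ≥ ⨆ (h : XZ × XF → ℝ) (_ : Measurable h ∧ MemLp (fun ω => h (Z ω, F ω)) 2 P ∧
        ∀ p, 0 ≤ h p ∧ h p ≤ 1), ((|Q h| : ℝ) : EReal) := by
  have hweight : ∀ {s t : ℝ} {p : Ω → ℝ},
      p =ᵐ[P] P[fun ω => if S ω = t then 1 else 0 | MeasurableSpace.comap F inferInstance] →
      Integrable (fun ω => (if S ω = s then (1 : ℝ) else 0) * p ω) P ∧
        0 ≤ᵐ[P] fun ω => (if S ω = s then (1 : ℝ) else 0) * p ω := @fun s t p hp =>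
    ⟨(integrable_condExp.congr hp.symm).bdd_mul
        (integrable_ite_eq_one_zero hS _).aestronglyMeasurable
        (ae_of_all _ fun _ => abs_ite_one_zero_le _),
      by filter_upwards [hp, condExp_nonneg (ae_of_all _ fun ω => ite_one_zero_nonneg (S ω = t))]
           with ω hω hpos
         exact mul_nonneg (ite_one_zero_nonneg _) (hω ▸ hpos)⟩
  have hC : ∫ ω, (if S ω = 1 then (1 : ℝ) else 0) * p0 ω ∂P
      = ∫ ω, (if S ω = 0 then (1 : ℝ) else 0) * p1 ω ∂P := by
    rw [integral_congr_ae (hp0.mono fun ω hω => congrArg _ hω),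
      integral_congr_ae (hp1.mono fun ω hω => congrArg _ hω)]
    exact integral_mul_condExp_comm hF.comap_le (integrable_ite_eq_one_zero hS 1)
      (integrable_ite_eq_one_zero hS 0) (ae_of_all _ fun _ => abs_ite_one_zero_le _)
      (ae_of_all _ fun _ => abs_ite_one_zero_le _)
  refine iSup₂_mono' fun h hh => ?_
  have hH01 : ∀ᵐ ω ∂P, h (Z ω, F ω) ∈ Set.Icc 0 1 := ae_of_all _ fun ω => hh.2.2 _
  obtain hle | hle := le_max_iff.1 <| abs_fairGap_le_max_l2Surrogate (hweight hp0).1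
    (hweight hp1).1 (hweight hp0).2 (hweight hp1).2 hC hh.2.1.aestronglyMeasurable hH01
  · exact ⟨h, hh, EReal.coe_le_coe_iff.2 (by rwa [hQ, hQ'])⟩
  · exact ⟨_, one_sub_mem_admissible hh, EReal.coe_le_coe_iff.2 (by rwa [hQ, hQ'])⟩

/-- **The L2 surrogate regularizer upper-bounds the fairness regularizer:**
`L'_fair = sup_{h ∈ H_ZF} Q'(h) ≥ sup_{h ∈ H_ZF} |Q(h)| = L_fair` (suprema in the extended
reals), where `C = E[𝟙{S=1} ⬝ P(S=0|F)]`,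
`Q(h) = E[𝟙{S=1} ⬝ P(S=0|F) ⬝ h(Z,F)] − E[𝟙{S=0} ⬝ P(S=1|F) ⬝ h(Z,F)]`,
`Q'(h) = C − E[𝟙{S=1} ⬝ P(S=0|F) ⬝ (1 − h(Z,F))²] − E[𝟙{S=0} ⬝ P(S=1|F) ⬝ h(Z,F)²]`, and
`H_ZF` is the set of measurable `h : 𝒳_Z × 𝒳_F → ℝ` with `E[h(Z,F)²] < ∞` and `0 ≤ h ≤ 1`
pointwise; the versions `P(S=s|F)` are chosen with values in `[0,1]` everywhere. -/
theorem L2_surrogate_regularizer_upper_bounds_fairness_regularizer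
    {Ω : Type*} [MeasurableSpace Ω]
    {XF XZ : Type*} [MeasurableSpace XF] [MeasurableSpace XZ]
    (P : Measure Ω) [IsProbabilityMeasure P]
    (S : Ω → ℝ) (hS : Measurable S) (hS01 : ∀ ω, S ω = 0 ∨ S ω = 1)
    (F : Ω → XF) (hF : Measurable F)
    (Z : Ω → XZ) (hZ : Measurable Z)
    (p0 p1 : Ω → ℝ)
    (hp0 : p0 =ᵐ[P]
      P[fun ω => if S ω = 0 then (1 : ℝ) else 0 | MeasurableSpace.comap F inferInstance])
    (hp1 : p1 =ᵐ[P]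
      P[fun ω => if S ω = 1 then (1 : ℝ) else 0 | MeasurableSpace.comap F inferInstance])
    (hp0bd : ∀ ω, 0 ≤ p0 ω ∧ p0 ω ≤ 1) (hp1bd : ∀ ω, 0 ≤ p1 ω ∧ p1 ω ≤ 1)
    (Q Q' : (XZ × XF → ℝ) → ℝ)
    (hQ : ∀ h : XZ × XF → ℝ,
      Q h = (∫ ω, (if S ω = 1 then (1 : ℝ) else 0) * p0 ω * h (Z ω, F ω) ∂P)
        - ∫ ω, (if S ω = 0 then (1 : ℝ) else 0) * p1 ω * h (Z ω, F ω) ∂P)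
    (hQ' : ∀ h : XZ × XF → ℝ,
      Q' h = (∫ ω, (if S ω = 1 then (1 : ℝ) else 0) * p0 ω ∂P)
        - (∫ ω, (if S ω = 1 then (1 : ℝ) else 0) * p0 ω * (1 - h (Z ω, F ω)) ^ 2 ∂P)
        - ∫ ω, (if S ω = 0 then (1 : ℝ) else 0) * p1 ω * h (Z ω, F ω) ^ 2 ∂P) :
    (⨆ (h : XZ × XF → ℝ) (_ : Measurable h ∧ MemLp (fun ω => h (Z ω, F ω)) 2 P ∧
        ∀ p, 0 ≤ h p ∧ h p ≤ 1), ((Q' h : ℝ) : EReal))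
    ≥ ⨆ (h : XZ × XF → ℝ) (_ : Measurable h ∧ MemLp (fun ω => h (Z ω, F ω)) 2 P ∧
        ∀ p, 0 ≤ h p ∧ h p ≤ 1), ((|Q h| : ℝ) : EReal) :=
  L2_surrogate_regularizer_upper_bounds_fairness_regularizer_general P S hS F hF Z p0 p1 hp0 hp1 Q
    Q' hQ hQ'
end
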